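/- arXiv:2012.07572 — 5 statements merged into one kernel-verified Lean document; each statement's English description precedes it below -/
import Mathlib

section
/- Let X^(1),…,X^(M) ∈ ℝ^d with M ≥ 2 and let g : ℝ^d → ℝ^p be Lipschitz continuous with Lipschitz constant L. Let E ∈ ℝ^{d×M} be the matrix with columns X^(i) − x̄ and 𝒢 ∈ ℝ^{p×M} the matrix with columns g(X^(i)) − ḡ. Then the spectral norm of E𝒢ᵀ satisfies ‖E𝒢ᵀ‖ ≤ L · Σ_{i=1}^M ‖X^(i) − x̄‖², i.e. ‖E𝒢ᵀ‖ ≤ (M−1) L tr(P) where tr(P) := (1/(M−1)) Σ_{i=1}^M ‖X^(i) − x̄‖². -/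
open Matrix MeasureTheory
open scoped Matrix.Norms.L2Operator NNReal RealInnerProductSpace

/-- The ensemble mean `x̄ = (1/M) ∑ᵢ X⁽ⁱ⁾`. -/
noncomputable def ensMean {d M : ℕ} (X : Fin M → EuclideanSpace ℝ (Fin d)) :
    EuclideanSpace ℝ (Fin d) :=
  (M : ℝ)⁻¹ • ∑ i, X i

/-- The matrix of ensemble deviations, with columns `X⁽ⁱ⁾ − x̄`. -/
noncomputable def devMat {d M : ℕ} (X : Fin M → EuclideanSpace ℝ (Fin d)) :
    Matrix (Fin d) (Fin M) ℝ :=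
  Matrix.of fun j i => (X i - ensMean X) j

/-- The trace of the empirical covariance matrix,
`tr(P) = (1/(M−1)) ∑ᵢ ‖X⁽ⁱ⁾ − x̄‖²`. -/
noncomputable def trP {d M : ℕ} (X : Fin M → EuclideanSpace ℝ (Fin d)) : ℝ :=
  ((M : ℝ) - 1)⁻¹ * ∑ i, ‖X i - ensMean X‖ ^ 2

/-!
Bound both factors of `E𝒢ᵀ` by their Frobenius norms. The mean `ḡ` minimises
`c ↦ ∑ᵢ ‖g(X⁽ⁱ⁾) − c‖²`, so comparing with `c = g(x̄)` and using the Lipschitz bound gives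
`‖𝒢‖_F² ≤ L² ‖E‖_F²`, while `‖E‖_F² = ∑ᵢ ‖X⁽ⁱ⁾ − x̄‖²`.
-/

open Finset

namespace Matrix

variable {𝕜 m n : Type*} [RCLike 𝕜] [Fintype m] [Fintype n] [DecidableEq n]

theorem l2_opNorm_le_sqrt_sum_norm_sq (A : Matrix m n 𝕜) :
    ‖A‖ ≤ √(∑ i, ∑ j, ‖A i j‖ ^ 2) := by
  rw [l2_opNorm_def]
  refine ContinuousLinearMap.opNorm_le_bound _ (Real.sqrt_nonneg _) fun x => ?_
  have row_le (i : m) : ‖∑ j, A i j * x j‖ ^ 2 ≤ (∑ j, ‖A i j‖ ^ 2) * ∑ j, ‖x j‖ ^ 2 := by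
    calc ‖∑ j, A i j * x j‖ ^ 2 ≤ (∑ j, ‖A i j‖ * ‖x j‖) ^ 2 := by
          gcongr
          exact (norm_sum_le _ _).trans_eq (by simp only [norm_mul])
      _ ≤ _ := sum_mul_sq_le_sq_mul_sq _ _ _
  rw [EuclideanSpace.norm_eq, EuclideanSpace.norm_eq, ← Real.sqrt_mul (by positivity),
    sum_mul]
  gcongr with i
  simpa [Matrix.mulVec, dotProduct] using row_le i

end Matrix

theorem Finset.sum_norm_sub_mean_sq_le {ι E : Type*} [NormedAddCommGroup E]
    [InnerProductSpace ℝ E] (s : Finset ι) (y : ι → E) (c : E) :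
    ∑ i ∈ s, ‖y i - (#s : ℝ)⁻¹ • ∑ j ∈ s, y j‖ ^ 2 ≤ ∑ i ∈ s, ‖y i - c‖ ^ 2 := by
  rcases s.eq_empty_or_nonempty with rfl | hs
  · simp
  set μ : E := (#s : ℝ)⁻¹ • ∑ j ∈ s, y j
  have sum_sub_mean : ∑ i ∈ s, (y i - μ) = 0 := by
    rw [sum_sub_distrib, sum_const, ← Nat.cast_smul_eq_nsmul ℝ, smul_smul,
      mul_inv_cancel₀ (by exact_mod_cast hs.card_ne_zero), one_smul, sub_self]
  have pythagoras : ∑ i ∈ s, ‖y i - c‖ ^ 2 = ∑ i ∈ s, ‖y i - μ‖ ^ 2 + #s * ‖μ - c‖ ^ 2 := by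
    have split (i : ι) : y i - c = (y i - μ) + (μ - c) := (sub_add_sub_cancel _ _ _).symm
    simp_rw [split, norm_add_sq_real, sum_add_distrib, ← mul_sum,
      ← sum_inner, sum_sub_mean, inner_zero_left, mul_zero, add_zero, sum_const, nsmul_eq_mul]
  rw [pythagoras]
  exact le_add_of_nonneg_right (by positivity)

section Ensemble

variable {d p M : ℕ}

theorem sum_norm_sub_ensMean_sq_le (X : Fin M → EuclideanSpace ℝ (Fin d))
    (c : EuclideanSpace ℝ (Fin d)) :
    ∑ i, ‖X i - ensMean X‖ ^ 2 ≤ ∑ i, ‖X i - c‖ ^ 2 := by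
  simpa [ensMean] using univ.sum_norm_sub_mean_sq_le X c

theorem LipschitzWith.sum_norm_sub_ensMean_comp_sq_le {L : ℝ≥0}
    {g : EuclideanSpace ℝ (Fin d) → EuclideanSpace ℝ (Fin p)} (hg : LipschitzWith L g)
    (X : Fin M → EuclideanSpace ℝ (Fin d)) :
    ∑ i, ‖g (X i) - ensMean (g ∘ X)‖ ^ 2 ≤ (L : ℝ) ^ 2 * ∑ i, ‖X i - ensMean X‖ ^ 2 := by
  calc ∑ i, ‖g (X i) - ensMean (g ∘ X)‖ ^ 2
      ≤ ∑ i, ‖g (X i) - g (ensMean X)‖ ^ 2 := sum_norm_sub_ensMean_sq_le (g ∘ X) _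
    _ ≤ ∑ i, ((L : ℝ) * ‖X i - ensMean X‖) ^ 2 := by
      gcongr with i
      simpa only [dist_eq_norm] using hg.dist_le_mul (X i) (ensMean X)
    _ = (L : ℝ) ^ 2 * ∑ i, ‖X i - ensMean X‖ ^ 2 := by simp_rw [mul_pow, mul_sum]

theorem norm_devMat_le (X : Fin M → EuclideanSpace ℝ (Fin d)) :
    ‖devMat X‖ ≤ √(∑ i, ‖X i - ensMean X‖ ^ 2) := by
  refine (devMat X).l2_opNorm_le_sqrt_sum_norm_sq.trans_eq ?_
  simp_rw [sum_comm (γ := Fin d), EuclideanSpace.norm_sq_eq]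
  rfl

theorem norm_devMat_transpose_le (X : Fin M → EuclideanSpace ℝ (Fin d)) :
    ‖(devMat X)ᵀ‖ ≤ √(∑ i, ‖X i - ensMean X‖ ^ 2) := by
  rw [← conjTranspose_eq_transpose_of_trivial, l2_opNorm_conjTranspose]
  exact norm_devMat_le X

end Ensemble

theorem cross_covariance_specNorm_bound_general {d p M : ℕ} (L : ℝ≥0)
    (g : EuclideanSpace ℝ (Fin d) → EuclideanSpace ℝ (Fin p)) (hg : LipschitzWith L g)
    (X : Fin M → EuclideanSpace ℝ (Fin d)) :
    ‖devMat X * (devMat (g ∘ X))ᵀ‖ ≤ (L : ℝ) * ∑ i, ‖X i - ensMean X‖ ^ 2 := by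
  set S := ∑ i, ‖X i - ensMean X‖ ^ 2
  calc ‖devMat X * (devMat (g ∘ X))ᵀ‖
      ≤ ‖devMat X‖ * ‖(devMat (g ∘ X))ᵀ‖ := l2_opNorm_mul _ _
    _ ≤ √S * √(∑ i, ‖g (X i) - ensMean (g ∘ X)‖ ^ 2) := by
      gcongr
      exacts [norm_devMat_le X, norm_devMat_transpose_le (g ∘ X)]
    _ ≤ √S * √((L : ℝ) ^ 2 * S) := by
      gcongr
      exact hg.sum_norm_sub_ensMean_comp_sq_le X
    _ = (L : ℝ) * S := by
      rw [Real.sqrt_mul (by positivity), Real.sqrt_sq L.coe_nonneg, mul_left_comm,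
        Real.mul_self_sqrt (by positivity)]

/-- spectral norm bound on the cross-covariance `E𝒢ᵀ`:
`‖E𝒢ᵀ‖ ≤ L · ∑ᵢ ‖X⁽ⁱ⁾ − x̄‖² = (M−1) L tr(P)`. -/
theorem cross_covariance_specNorm_bound {d p M : ℕ} (hM : 2 ≤ M) (L : ℝ≥0)
    (g : EuclideanSpace ℝ (Fin d) → EuclideanSpace ℝ (Fin p)) (hg : LipschitzWith L g)
    (X : Fin M → EuclideanSpace ℝ (Fin d)) :
    ‖devMat X * (devMat (g ∘ X))ᵀ‖ ≤ (L : ℝ) * ∑ i, ‖X i - ensMean X‖ ^ 2 :=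
  cross_covariance_specNorm_bound_general L g hg X
end

section
/- Let C ∈ ℝ^{p×p} be symmetric positive definite and D ∈ ℝ^{p×p} symmetric positive semidefinite. Then, with square roots denoting the positive semidefinite matrix square roots, the spectral norm satisfies ‖(C+D)^{−1/2} (C^{1/2} + (C+D)^{1/2})⁻¹‖ ≤ (1/2) ‖C⁻¹‖, where (C+D)^{−1/2} := ((C+D)^{1/2})⁻¹. -/
/-!
Write `A = C^{1/2}` and `B = (C+D)^{1/2}`. By submultiplicativity and the C⋆-identity
`‖A⁻¹‖² = ‖C⁻¹‖`, it suffices to show `‖B⁻¹‖ ≤ ‖A⁻¹‖` and `‖(A+B)⁻¹‖ ≤ ‖A⁻¹‖ / 2`.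
Both follow from the fact that, for positive definite `P`, `‖P⁻¹‖` is the least `c ≥ 0` with
`xᵀx ≤ c · xᵀPx` for all `x`: this makes `P ↦ ‖P⁻¹‖` antitone in the Loewner order, so
`‖B⁻¹‖² = ‖(C+D)⁻¹‖ ≤ ‖C⁻¹‖ = ‖A⁻¹‖²`, and adding the inequalities for `A` and `B` gives the
bound for `A + B`.
-/

open Matrix MeasureTheory
open scoped Matrix.Norms.L2Operator MatrixOrder NNReal RealInnerProductSpace

lemma EuclideanSpace.norm_toLp_sq_eq_dotProduct {n : Type*} [Fintype n] (x : n → ℝ) :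
    ‖WithLp.toLp 2 x‖ ^ 2 = x ⬝ᵥ x := by
  rw [← real_inner_self_eq_norm_sq, EuclideanSpace.inner_toLp_toLp, star_trivial]

namespace Matrix

variable {n : Type*} [Fintype n] [DecidableEq n]

lemma dotProduct_mulVec_le_l2_opNorm_mul (M : Matrix n n ℝ) (x : n → ℝ) :
    x ⬝ᵥ M *ᵥ x ≤ ‖M‖ * (x ⬝ᵥ x) := by
  have hM : ‖WithLp.toLp 2 (M *ᵥ x)‖ ≤ ‖M‖ * ‖WithLp.toLp 2 x‖ := M.l2_opNorm_mulVec _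
  calc x ⬝ᵥ M *ᵥ x = ⟪WithLp.toLp 2 x, WithLp.toLp 2 (M *ᵥ x)⟫ := by
        rw [EuclideanSpace.inner_toLp_toLp, star_trivial, dotProduct_comm]
    _ ≤ ‖WithLp.toLp 2 x‖ * ‖WithLp.toLp 2 (M *ᵥ x)‖ := real_inner_le_norm _ _
    _ ≤ ‖WithLp.toLp 2 x‖ * (‖M‖ * ‖WithLp.toLp 2 x‖) := by gcongr
    _ = ‖M‖ * (x ⬝ᵥ x) := by rw [← EuclideanSpace.norm_toLp_sq_eq_dotProduct]; ring

lemma l2_opNorm_inv_le_of_forall_dotProduct_le {P : Matrix n n ℝ} (hP : IsUnit P) {c : ℝ}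
    (hc : 0 ≤ c) (h : ∀ x, x ⬝ᵥ x ≤ c * (x ⬝ᵥ P *ᵥ x)) : ‖P⁻¹‖ ≤ c := by
  rw [l2_opNorm_def]
  refine ContinuousLinearMap.opNorm_le_bound _ hc fun y => ?_
  set x := P⁻¹ *ᵥ WithLp.ofLp y
  have hPx : P *ᵥ x = WithLp.ofLp y := by
    rw [mulVec_mulVec, mul_nonsing_inv _ (P.isUnit_iff_isUnit_det.mp hP), one_mulVec]
  change ‖WithLp.toLp 2 x‖ ≤ c * ‖y‖
  have hsq : ‖WithLp.toLp 2 x‖ * ‖WithLp.toLp 2 x‖ ≤ ‖WithLp.toLp 2 x‖ * (c * ‖y‖) := calc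
    ‖WithLp.toLp 2 x‖ * ‖WithLp.toLp 2 x‖ = x ⬝ᵥ x := by
        rw [← sq, EuclideanSpace.norm_toLp_sq_eq_dotProduct]
    _ ≤ c * (x ⬝ᵥ P *ᵥ x) := h x
    _ = c * ⟪WithLp.toLp 2 x, y⟫ := by
        rw [hPx, EuclideanSpace.inner_eq_star_dotProduct, star_trivial, dotProduct_comm]
    _ ≤ c * (‖WithLp.toLp 2 x‖ * ‖y‖) := by gcongr; exact real_inner_le_norm _ _
    _ = ‖WithLp.toLp 2 x‖ * (c * ‖y‖) := by ring
  rcases (norm_nonneg (WithLp.toLp 2 x)).eq_or_lt with hx | hx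
  · rw [← hx]; positivity
  · exact le_of_mul_le_mul_left hsq hx

lemma l2_opNorm_inv_sqrt_mul_self {𝕜 : Type*} [RCLike 𝕜] {P : Matrix n n 𝕜} (hP : 0 ≤ P) :
    ‖(CFC.sqrt P)⁻¹‖ * ‖(CFC.sqrt P)⁻¹‖ = ‖P⁻¹‖ := by
  have hS : ((CFC.sqrt P)⁻¹)ᴴ = (CFC.sqrt P)⁻¹ := by
    rw [conjTranspose_nonsing_inv, (CFC.sqrt_nonneg P).posSemidef.1]
  rw [← l2_opNorm_conjTranspose_mul_self, hS, ← Matrix.mul_inv_rev, CFC.sqrt_mul_sqrt_self P hP]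

namespace PosDef

lemma dotProduct_le_l2_opNorm_inv_mul {P : Matrix n n ℝ} (hP : P.PosDef) (x : n → ℝ) :
    x ⬝ᵥ x ≤ ‖P⁻¹‖ * (x ⬝ᵥ P *ᵥ x) := by
  set S := CFC.sqrt P
  -- write `x = S⁻¹ *ᵥ y` with `y = S *ᵥ x` and bound the quadratic form of `P⁻¹` at `y`
  have hS : S.PosDef := hP.isStrictlyPositive.sqrt.posDef
  have hSS : S * S = P := CFC.sqrt_mul_sqrt_self P hP.posSemidef.nonneg
  have hunit : IsUnit S.det := (isUnit_iff_isUnit_det S).mp hS.isUnit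
  have hquad (M : Matrix n n ℝ) : (S *ᵥ x) ⬝ᵥ M *ᵥ (S *ᵥ x) = x ⬝ᵥ (S * M * S) *ᵥ x := by
    rw [mulVec_mulVec, ← vecMul_transpose, ← dotProduct_mulVec, mulVec_mulVec,
      show Sᵀ = S from hS.isHermitian, Matrix.mul_assoc]
  calc x ⬝ᵥ x = (S *ᵥ x) ⬝ᵥ P⁻¹ *ᵥ (S *ᵥ x) := by
        rw [hquad, ← hSS, Matrix.mul_inv_rev, ← Matrix.mul_assoc S, mul_nonsing_inv _ hunit,
          Matrix.one_mul, nonsing_inv_mul _ hunit, one_mulVec]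
    _ ≤ ‖P⁻¹‖ * ((S *ᵥ x) ⬝ᵥ S *ᵥ x) := dotProduct_mulVec_le_l2_opNorm_mul _ _
    _ = ‖P⁻¹‖ * (x ⬝ᵥ P *ᵥ x) := by
        have h := hquad 1
        rw [one_mulVec, Matrix.mul_one, hSS] at h
        rw [h]

lemma l2_opNorm_inv_le_of_le {P Q : Matrix n n ℝ} (hP : P.PosDef) (hPQ : P ≤ Q) :
    ‖Q⁻¹‖ ≤ ‖P⁻¹‖ := by
  have hQP : (Q - P).PosSemidef := hPQ
  have hQ : Q.PosDef := by simpa using hP.add_posSemidef hQP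
  refine l2_opNorm_inv_le_of_forall_dotProduct_le hQ.isUnit (norm_nonneg _) fun x => ?_
  have hgap : 0 ≤ x ⬝ᵥ (Q - P) *ᵥ x := by simpa using hQP.dotProduct_mulVec_nonneg x
  rw [sub_mulVec, dotProduct_sub] at hgap
  calc x ⬝ᵥ x ≤ ‖P⁻¹‖ * (x ⬝ᵥ P *ᵥ x) := hP.dotProduct_le_l2_opNorm_inv_mul x
    _ ≤ ‖P⁻¹‖ * (x ⬝ᵥ Q *ᵥ x) := by gcongr; linarith

lemma l2_opNorm_inv_add_le_half {P Q : Matrix n n ℝ} (hP : P.PosDef) (hQ : Q.PosDef) {c : ℝ}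
    (hPc : ‖P⁻¹‖ ≤ c) (hQc : ‖Q⁻¹‖ ≤ c) : ‖(P + Q)⁻¹‖ ≤ c / 2 := by
  have hc : 0 ≤ c := (norm_nonneg _).trans hPc
  refine l2_opNorm_inv_le_of_forall_dotProduct_le (hP.add hQ).isUnit (by positivity)
    fun x => ?_
  have hPx := hP.dotProduct_le_l2_opNorm_inv_mul x
  have hQx := hQ.dotProduct_le_l2_opNorm_inv_mul x
  have hPc' : ‖P⁻¹‖ * (x ⬝ᵥ P *ᵥ x) ≤ c * (x ⬝ᵥ P *ᵥ x) := by
    gcongr; simpa using hP.posSemidef.dotProduct_mulVec_nonneg x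
  have hQc' : ‖Q⁻¹‖ * (x ⬝ᵥ Q *ᵥ x) ≤ c * (x ⬝ᵥ Q *ᵥ x) := by
    gcongr; simpa using hQ.posSemidef.dotProduct_mulVec_nonneg x
  rw [add_mulVec, dotProduct_add]
  linarith

end PosDef

end Matrix

/-- `‖(C+D)^{−1/2} (C^{1/2} + (C+D)^{1/2})⁻¹‖ ≤ (1/2) ‖C⁻¹‖` for
`C` symmetric positive definite and `D` symmetric positive semidefinite. -/
theorem sqrt_resolvent_product_bound {p : ℕ} (C D : Matrix (Fin p) (Fin p) ℝ)
    (hC : C.PosDef) (hD : D.PosSemidef) :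
    ‖(CFC.sqrt (C + D))⁻¹ * (CFC.sqrt C + CFC.sqrt (C + D))⁻¹‖ ≤
      (1 / 2) * ‖C⁻¹‖ := by
  have hCD : (C + D).PosDef := hC.add_posSemidef hD
  set A := CFC.sqrt C
  set B := CFC.sqrt (C + D)
  have hA : ‖A⁻¹‖ * ‖A⁻¹‖ = ‖C⁻¹‖ := l2_opNorm_inv_sqrt_mul_self hC.posSemidef.nonneg
  have hB : ‖B⁻¹‖ ≤ ‖A⁻¹‖ := by
    refine mul_self_le_mul_self_iff (norm_nonneg _) (norm_nonneg _) |>.mpr ?_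
    rw [hA, l2_opNorm_inv_sqrt_mul_self hCD.posSemidef.nonneg]
    exact hC.l2_opNorm_inv_le_of_le (le_add_of_nonneg_right hD.nonneg)
  have hAB : ‖(A + B)⁻¹‖ ≤ ‖A⁻¹‖ / 2 :=
    PosDef.l2_opNorm_inv_add_le_half hC.isStrictlyPositive.sqrt.posDef
      hCD.isStrictlyPositive.sqrt.posDef le_rfl hB
  calc ‖B⁻¹ * (A + B)⁻¹‖ ≤ ‖B⁻¹‖ * ‖(A + B)⁻¹‖ := l2_opNorm_mul _ _
    _ ≤ ‖A⁻¹‖ * (‖A⁻¹‖ / 2) := by gcongr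
    _ = (1 / 2) * ‖C⁻¹‖ := by rw [← hA]; ring
end

section
/- (Second-order remainder bound for the ETKF transformation.) Let B ∈ ℝ^{M×M} be symmetric positive semidefinite. Then the spectral norm satisfies ‖ ((Id_M + B)⁻¹)^{1/2} − Id_M + (1/2) B ‖ ≤ (3/8) ‖B‖². -/
open Matrix MeasureTheory
open scoped Matrix.Norms.L2Operator NNReal RealInnerProductSpace

/-- The positive semidefinite square root of a positive semidefinite matrix
(the definition `Matrix.PosSemidef.sqrt` of the older Mathlib, since removed). -/
noncomputable def Matrix.PosSemidef.sqrt {n 𝕜 : Type*} [Fintype n] [RCLike 𝕜] [PartialOrder 𝕜]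
    [StarOrderedRing 𝕜] [DecidableEq n]
    {A : Matrix n n 𝕜} (hA : A.PosSemidef) : Matrix n n 𝕜 :=
  hA.1.eigenvectorUnitary.1 * diagonal ((↑) ∘ (√·) ∘ hA.1.eigenvalues) *
  (star hA.1.eigenvectorUnitary : Matrix n n 𝕜)

/-! The remainder is `f B` in the continuous functional calculus of `B`, with
`f x = (1 + x)^{-1/2} - 1 + x/2`. For real matrices this calculus is isometric for the spectral
norm, so the norm of the remainder is the maximum of `|f|` on the spectrum of `B`, which lies in
`[0, ‖B‖]`. There `0 ≤ f x ≤ 3/8 x²`: writing `√(1 + x) = 1 + t`, both `f x` and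
`3/8 x² - f x` are rational functions of `t ≥ 0` with nonnegative coefficients. -/

lemma abs_inv_sqrt_one_add_sub_one_add_half_le {x : ℝ} (hx : 0 ≤ x) :
    |(√(1 + x))⁻¹ - 1 + x / 2| ≤ 3 / 8 * x ^ 2 := by
  obtain ⟨t, ht, rfl⟩ : ∃ t, 0 ≤ t ∧ x = (1 + t) ^ 2 - 1 :=
    ⟨√(1 + x) - 1, by simp [Real.one_le_sqrt, hx],
      by rw [add_sub_cancel, Real.sq_sqrt (by linarith)]; ring⟩
  have hlower : (1 + t)⁻¹ - 1 + ((1 + t) ^ 2 - 1) / 2 = t ^ 2 * (t + 3) / (2 * (1 + t)) := by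
    field_simp; ring
  have hupper : 3 / 8 * ((1 + t) ^ 2 - 1) ^ 2 - ((1 + t)⁻¹ - 1 + ((1 + t) ^ 2 - 1) / 2)
      = t ^ 3 * (3 * t ^ 2 + 15 * t + 20) / (8 * (1 + t)) := by
    field_simp; ring
  rw [add_sub_cancel, Real.sqrt_sq (by linarith), abs_le]
  constructor
  · have : 0 ≤ t ^ 2 * (t + 3) / (2 * (1 + t)) := by positivity
    nlinarith
  · have : 0 ≤ t ^ 3 * (3 * t ^ 2 + 15 * t + 20) / (8 * (1 + t)) := by positivity
    linarith

namespace Matrix.PosSemidef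

variable {n : Type*} [Fintype n] [DecidableEq n]

lemma sqrt_eq_cfc_sqrt {𝕜 : Type*} [RCLike 𝕜] [PartialOrder 𝕜] [StarOrderedRing 𝕜]
    {A : Matrix n n 𝕜} (hA : A.PosSemidef) : hA.sqrt = cfc Real.sqrt A := by
  rw [hA.1.cfc_eq]
  simp [Matrix.PosSemidef.sqrt, Matrix.IsHermitian.cfc, Unitary.conjStarAlgAut_apply]

open scoped MatrixOrder in
lemma spectrum_nonneg {A : Matrix n n ℝ} (hA : A.PosSemidef) {x : ℝ}
    (hx : x ∈ spectrum ℝ A) : 0 ≤ x :=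
  spectrum_nonneg_of_nonneg hA.nonneg hx

lemma inv_one_add_eq_cfc {A : Matrix n n ℝ} (hA : A.PosSemidef) :
    (1 + A)⁻¹ = cfc (fun x : ℝ ↦ (1 + x)⁻¹) A := by
  have : IsSelfAdjoint A := hA.1
  rw [cfc_inv (fun x : ℝ ↦ 1 + x) A fun x hx ↦ by linarith [hA.spectrum_nonneg hx],
    cfc_const_add 1 (fun x ↦ x) A, cfc_id' ℝ A, nonsing_inv_eq_ringInverse]
  simp

lemma sqrt_inv_one_add_eq_cfc {A : Matrix n n ℝ} (hA : A.PosSemidef)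
    (h : ((1 + A)⁻¹).PosSemidef) : h.sqrt = cfc (fun x : ℝ ↦ (√(1 + x))⁻¹) A := by
  have hcomp := cfc_comp' Real.sqrt (fun x : ℝ ↦ (1 + x)⁻¹) A
    Real.continuous_sqrt.continuousOn ((finite_spectrum A).continuousOn _) hA.1
  rw [← hA.inv_one_add_eq_cfc] at hcomp
  rw [sqrt_eq_cfc_sqrt, ← hcomp]
  simp only [Real.sqrt_inv]

end Matrix.PosSemidef

/-- second-order remainder bound for the ETKF transformation:
`‖((Id + B)⁻¹)^{1/2} − Id + (1/2)B‖ ≤ (3/8) ‖B‖²` in spectral norm. -/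
theorem etkf_transformation_remainder_bound {M : ℕ} (B : Matrix (Fin M) (Fin M) ℝ)
    (hB : B.PosSemidef)
    (h1 : (((1 : Matrix (Fin M) (Fin M) ℝ) + B)⁻¹).PosSemidef) :
    ‖h1.sqrt - 1 + (2 : ℝ)⁻¹ • B‖ ≤ (3 / 8) * ‖B‖ ^ 2 := by
  have : IsSelfAdjoint B := hB.1
  have hcont (f : ℝ → ℝ) : ContinuousOn f (spectrum ℝ B) :=
    (finite_spectrum B).continuousOn f
  have hrem : h1.sqrt - 1 + (2 : ℝ)⁻¹ • B =
      cfc (fun x : ℝ ↦ (√(1 + x))⁻¹ - 1 + 2⁻¹ * x) B := by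
    rw [hB.sqrt_inv_one_add_eq_cfc, cfc_add _ _ _ (hcont _) (hcont _),
      cfc_sub _ _ _ (hcont _) (hcont _), cfc_const_one ℝ B, cfc_const_mul_id _ B]
  rw [hrem]
  refine norm_cfc_le (by positivity) fun x hx ↦ ?_
  have hx0 := hB.spectrum_nonneg hx
  have hxB : x ≤ ‖B‖ := by
    have := norm_apply_le_norm_cfc (fun x : ℝ ↦ x) B hx
    rwa [cfc_id' ℝ B, Real.norm_of_nonneg hx0] at this
  calc ‖(√(1 + x))⁻¹ - 1 + 2⁻¹ * x‖ ≤ 3 / 8 * x ^ 2 := by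
        simpa [inv_mul_eq_div] using abs_inv_sqrt_one_add_sub_one_add_half_le hx0
    _ ≤ 3 / 8 * ‖B‖ ^ 2 := by gcongr
end

section
/- (Trace identity for the EnKF analysis step.) Let X^(1),…,X^(M) ∈ ℝ^d with M ≥ 2, g : ℝ^d → ℝ^p any map, C ∈ ℝ^{p×p} symmetric positive definite and h ≥ 0. With E := [X^(i) − x̄]_{i=1}^M, 𝒢 := [g(X^(i)) − ḡ]_{i=1}^M and the EnKF gain K := (1/(M−1)) E 𝒢ᵀ (C + (h/(M−1)) 𝒢𝒢ᵀ)⁻¹, one has the identity (1/(M−1)) tr(K 𝒢 Eᵀ) = tr(K C Kᵀ) + (h/(M−1)) tr(K 𝒢 𝒢ᵀ Kᵀ). -/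
open Matrix MeasureTheory
open scoped Matrix.Norms.L2Operator NNReal RealInnerProductSpace

/-! `S = C + c 𝒢𝒢ᵀ` with `c = h/(M−1) ≥ 0` is positive definite, hence symmetric and invertible.
So the gain `K = a E 𝒢ᵀ S⁻¹`, `a = 1/(M−1)`, satisfies `K S = a E 𝒢ᵀ` and `Kᵀ = a S⁻¹ 𝒢 Eᵀ`, whence
`K S Kᵀ = a K 𝒢 Eᵀ`; expanding `S` in `tr(K S Kᵀ)` gives the two terms on the right. -/

namespace Matrix

theorem PosDef.add_smul_mul_transpose {m n : Type*} [Fintype n] [Finite m]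
    {C : Matrix m m ℝ} (hC : C.PosDef) (G : Matrix m n ℝ) {c : ℝ} (hc : 0 ≤ c) :
    (C + c • (G * Gᵀ)).PosDef := by
  refine hC.add_posSemidef (PosSemidef.smul ?_ hc)
  simpa only [conjTranspose_eq_transpose_of_trivial] using posSemidef_self_mul_conjTranspose G

theorem smul_mul_inv_mul_mul_transpose {d m n R : Type*} [Fintype m] [Fintype n] [DecidableEq n]
    [CommRing R] (E : Matrix d m R) (G : Matrix n m R) {S : Matrix n n R} (hS : S.IsSymm)
    (hdet : IsUnit S.det) (a : R) :
    a • (E * Gᵀ * S⁻¹) * S * (a • (E * Gᵀ * S⁻¹))ᵀ = a • (a • (E * Gᵀ * S⁻¹) * G * Eᵀ) := by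
  have hKt : (E * Gᵀ * S⁻¹)ᵀ = S⁻¹ * G * Eᵀ := by
    rw [transpose_mul, transpose_mul, transpose_transpose, hS.inv.eq, Matrix.mul_assoc]
  rw [transpose_smul, hKt, Matrix.smul_mul, nonsing_inv_mul_cancel_right S _ hdet]
  simp only [Matrix.smul_mul, Matrix.mul_smul, Matrix.mul_assoc]

theorem trace_mul_add_smul_mul {m n R : Type*} [Fintype m] [Fintype n] [CommSemiring R]
    (K : Matrix m n R) (C H : Matrix n n R) (c : R) :
    trace (K * (C + c • H) * Kᵀ) = trace (K * C * Kᵀ) + c * trace (K * H * Kᵀ) := by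
  simp only [Matrix.mul_add, Matrix.add_mul, trace_add, Matrix.mul_smul, Matrix.smul_mul,
    trace_smul, smul_eq_mul]

end Matrix

/-- trace identity for the EnKF analysis step: with the EnKF gain
`K = (1/(M−1)) E 𝒢ᵀ (C + (h/(M−1)) 𝒢𝒢ᵀ)⁻¹`,
`(1/(M−1)) tr(K 𝒢 Eᵀ) = tr(K C Kᵀ) + (h/(M−1)) tr(K 𝒢 𝒢ᵀ Kᵀ)`. -/
theorem enkf_analysis_trace_identity {d p M : ℕ} (hM : 2 ≤ M)
    (X : Fin M → EuclideanSpace ℝ (Fin d))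
    (g : EuclideanSpace ℝ (Fin d) → EuclideanSpace ℝ (Fin p))
    (C : Matrix (Fin p) (Fin p) ℝ) (hC : C.PosDef) (h : ℝ) (hh : 0 ≤ h) :
    (((M : ℝ) - 1)⁻¹) *
        Matrix.trace ((((M : ℝ) - 1)⁻¹ • (devMat X * (devMat (g ∘ X))ᵀ *
            (C + (h / ((M : ℝ) - 1)) • (devMat (g ∘ X) * (devMat (g ∘ X))ᵀ))⁻¹)) *
          devMat (g ∘ X) * (devMat X)ᵀ) =
      Matrix.trace ((((M : ℝ) - 1)⁻¹ • (devMat X * (devMat (g ∘ X))ᵀ *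
            (C + (h / ((M : ℝ) - 1)) • (devMat (g ∘ X) * (devMat (g ∘ X))ᵀ))⁻¹)) * C *
          (((M : ℝ) - 1)⁻¹ • (devMat X * (devMat (g ∘ X))ᵀ *
            (C + (h / ((M : ℝ) - 1)) • (devMat (g ∘ X) * (devMat (g ∘ X))ᵀ))⁻¹))ᵀ) +
      (h / ((M : ℝ) - 1)) *
        Matrix.trace ((((M : ℝ) - 1)⁻¹ • (devMat X * (devMat (g ∘ X))ᵀ *
            (C + (h / ((M : ℝ) - 1)) • (devMat (g ∘ X) * (devMat (g ∘ X))ᵀ))⁻¹)) *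
          devMat (g ∘ X) * (devMat (g ∘ X))ᵀ *
          (((M : ℝ) - 1)⁻¹ • (devMat X * (devMat (g ∘ X))ᵀ *
            (C + (h / ((M : ℝ) - 1)) • (devMat (g ∘ X) * (devMat (g ∘ X))ᵀ))⁻¹))ᵀ) := by
  set E := devMat X
  set G := devMat (g ∘ X)
  set c := h / ((M : ℝ) - 1)
  set S := C + c • (G * Gᵀ)
  have hc : 0 ≤ c := div_nonneg hh (by linarith [show (2 : ℝ) ≤ M by exact_mod_cast hM])
  have hS : S.PosDef := hC.add_smul_mul_transpose G hc
  have hgain := smul_mul_inv_mul_mul_transpose E G (isHermitian_iff_isSymm.mp hS.isHermitian)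
    ((isUnit_iff_isUnit_det S).mp hS.isUnit) ((M : ℝ) - 1)⁻¹
  set K := ((M : ℝ) - 1)⁻¹ • (E * Gᵀ * S⁻¹)
  rw [Matrix.mul_assoc K G Gᵀ, ← trace_mul_add_smul_mul, hgain, trace_smul, smul_eq_mul]
end

section
/- (Square-root condition for the ETKF transformation.) Let E ∈ ℝ^{d×M} and Γ ∈ ℝ^{p×M} with M ≥ 2, let C ∈ ℝ^{p×p} be symmetric positive definite and h ≥ 0. Then, with K := (1/(M−1)) E Γᵀ (C + (h/(M−1)) ΓΓᵀ)⁻¹, (1/(M−1)) · E (Id_M + (h/(M−1)) Γᵀ C⁻¹ Γ)⁻¹ Eᵀ = (1/(M−1)) E Eᵀ − (h/(M−1)) K Γ Eᵀ. In particular, the transformed ensemble deviations E T with T := ((Id_M + (h/(M−1)) Γᵀ C⁻¹ Γ)⁻¹)^{1/2} reproduce exactly the Kalman-updated empirical covariance matrix. -/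
/-!
With `c = h/(M−1) ≥ 0` the matrix `C + c ΓΓᵀ` is positive definite, and the Woodbury identity
gives `(I + c ΓᵀC⁻¹Γ)⁻¹ = I − c Γᵀ(C + c ΓΓᵀ)⁻¹Γ`; sandwiching it between `E` and `Eᵀ` is the
Kalman update of the covariance. The matrix `T` is the functional-calculus square root of the
positive semidefinite matrix `S = (I + c ΓᵀC⁻¹Γ)⁻¹`, hence symmetric with `T² = S`, so
`(ET)(ET)ᵀ = E S Eᵀ`.
-/

open Matrix MeasureTheory
open scoped Matrix.Norms.L2Operator NNReal RealInnerProductSpace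

theorem Matrix.inv_one_add_smul_mul_inv_mul {K m n : Type*} [CommRing K] [Fintype m]
    [DecidableEq m] [Fintype n] [DecidableEq n] (U : Matrix n m K) (V : Matrix m n K)
    {C : Matrix m m K} (c : K) (hC : IsUnit C) (hCVU : IsUnit (C + c • (V * U))) :
    (1 + c • (U * C⁻¹ * V))⁻¹ = 1 - c • (U * (C + c • (V * U))⁻¹ * V) := by
  have hCinv : C⁻¹⁻¹ = C := nonsing_inv_nonsing_inv C ((isUnit_iff_isUnit_det C).mp hC)
  have := add_mul_mul_inv_eq_sub (1 : Matrix n n K) (c • U) C⁻¹ V isUnit_one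
    (isUnit_nonsing_inv_iff.mpr hC) (by simpa [hCinv] using hCVU)
  simpa [hCinv, Matrix.mul_assoc] using this

theorem Matrix.PosSemidef.cfc_sqrt_mul_self {n : Type*} [Fintype n] [DecidableEq n]
    {A : Matrix n n ℝ} (hA : A.PosSemidef) : cfc Real.sqrt A * cfc Real.sqrt A = A := by
  rw [← cfc_mul Real.sqrt Real.sqrt A]
  conv_rhs => rw [← cfc_id' ℝ A hA.1.isSelfAdjoint]
  refine cfc_congr fun x hx => Real.mul_self_sqrt ?_
  obtain ⟨i, rfl⟩ := hA.1.spectrum_real_eq_range_eigenvalues ▸ hx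
  exact hA.eigenvalues_nonneg i

theorem Matrix.transpose_cfc {n : Type*} [Fintype n] [DecidableEq n] (f : ℝ → ℝ)
    (A : Matrix n n ℝ) : (cfc f A)ᵀ = cfc f A := by
  rw [← conjTranspose_eq_transpose_of_trivial, ← star_eq_conjTranspose]
  exact (cfc_predicate f A).star_eq

theorem Matrix.PosSemidef.mul_cfc_sqrt_mul_transpose {n k : Type*} [Fintype n] [DecidableEq n]
    {A : Matrix n n ℝ} (hA : A.PosSemidef) (E : Matrix k n ℝ) :
    E * cfc Real.sqrt A * (E * cfc Real.sqrt A)ᵀ = E * A * Eᵀ := by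
  rw [transpose_mul, transpose_cfc, Matrix.mul_assoc, ← Matrix.mul_assoc (cfc _ A),
    hA.cfc_sqrt_mul_self, ← Matrix.mul_assoc]

theorem Matrix.PosDef.add_smul_mul_transpose_s19 {m n : Type*} [Fintype m] [Fintype n]
    {C : Matrix m m ℝ} (hC : C.PosDef) (Γ : Matrix m n ℝ) {c : ℝ} (hc : 0 ≤ c) :
    (C + c • (Γ * Γᵀ)).PosDef := by
  refine hC.add_posSemidef (PosSemidef.smul ?_ hc)
  simpa using posSemidef_self_mul_conjTranspose Γ

/-- square-root condition for the ETKF transformation: with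
`K = (1/(M−1)) E Γᵀ (C + (h/(M−1)) ΓΓᵀ)⁻¹`,
`(1/(M−1)) E (Id + (h/(M−1)) Γᵀ C⁻¹ Γ)⁻¹ Eᵀ = (1/(M−1)) E Eᵀ − (h/(M−1)) K Γ Eᵀ`;
in particular the transformed deviations `E T`, with
`T = ((Id + (h/(M−1)) Γᵀ C⁻¹ Γ)⁻¹)^{1/2}`, reproduce the Kalman-updated empirical
covariance matrix. -/
theorem etkf_square_root_condition {d p M : ℕ} (hM : 2 ≤ M)
    (E : Matrix (Fin d) (Fin M) ℝ) (Γ : Matrix (Fin p) (Fin M) ℝ)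
    (C : Matrix (Fin p) (Fin p) ℝ) (hC : C.PosDef) (h : ℝ) (hh : 0 ≤ h)
    (hT : ((((1 : Matrix (Fin M) (Fin M) ℝ) +
        (h / ((M : ℝ) - 1)) • (Γᵀ * C⁻¹ * Γ)))⁻¹).PosSemidef) :
    (((M : ℝ) - 1)⁻¹) •
        (E * ((1 : Matrix (Fin M) (Fin M) ℝ) + (h / ((M : ℝ) - 1)) • (Γᵀ * C⁻¹ * Γ))⁻¹ * Eᵀ) =
      (((M : ℝ) - 1)⁻¹) • (E * Eᵀ) -
        (h / ((M : ℝ) - 1)) •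
          ((((M : ℝ) - 1)⁻¹ • (E * Γᵀ * (C + (h / ((M : ℝ) - 1)) • (Γ * Γᵀ))⁻¹)) * Γ * Eᵀ) ∧
    (((M : ℝ) - 1)⁻¹) • ((E * ((hT.1.eigenvectorUnitary : Matrix (Fin M) (Fin M) ℝ) * diagonal (Real.sqrt ∘ hT.1.eigenvalues) * (star hT.1.eigenvectorUnitary : Matrix (Fin M) (Fin M) ℝ))) * (E * ((hT.1.eigenvectorUnitary : Matrix (Fin M) (Fin M) ℝ) * diagonal (Real.sqrt ∘ hT.1.eigenvalues) * (star hT.1.eigenvectorUnitary : Matrix (Fin M) (Fin M) ℝ)))ᵀ) =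
      (((M : ℝ) - 1)⁻¹) • (E * Eᵀ) -
        (h / ((M : ℝ) - 1)) •
          ((((M : ℝ) - 1)⁻¹ • (E * Γᵀ * (C + (h / ((M : ℝ) - 1)) • (Γ * Γᵀ))⁻¹)) * Γ * Eᵀ) := by
  -- `T` is the spectral formula that `IsHermitian.cfc` unfolds to.
  change _ ∧ _ • (E * hT.1.cfc Real.sqrt * (E * hT.1.cfc Real.sqrt)ᵀ) = _
  rw [← hT.1.cfc_eq, hT.mul_cfc_sqrt_mul_transpose, and_self]
  set c : ℝ := h / ((M : ℝ) - 1)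
  have hc : 0 ≤ c := div_nonneg hh (by
    have : (2 : ℝ) ≤ M := by exact_mod_cast hM
    linarith)
  have hWoodbury : (1 + c • (Γᵀ * C⁻¹ * Γ))⁻¹ = 1 - c • (Γᵀ * (C + c • (Γ * Γᵀ))⁻¹ * Γ) :=
    inv_one_add_smul_mul_inv_mul Γᵀ Γ c hC.isUnit (hC.add_smul_mul_transpose_s19 Γ hc).isUnit
  rw [hWoodbury]
  simp only [Matrix.mul_sub, Matrix.sub_mul, Matrix.mul_one, Matrix.mul_smul, Matrix.smul_mul,
    smul_sub, smul_smul, Matrix.mul_assoc, mul_comm c]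
end
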